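/- Suppose f is convex and f' is Lipschitz continuous on D with constant L > 0. Let {x^k} be generated by the conditional gradient method x^{k+1} = x^k + λ_k d^k, where d^k = y^k − x^k, y^k ∈ Z(x^k), and λ_k = min{1, θ_k σ_k} with σ_k = −⟨f'(x^k), d^k⟩ / ‖d^k‖² and θ_k ∈ [θ', θ''] for fixed 0 < θ' ≤ θ'' < 2/L. Then there exists a constant C < +∞ such that f(x^k) − f* ≤ C/k for all k ≥ 1. -/

import Mathlib

/-!
Write `d = y - x` for the direction of a step and `Δ = -⟪f' x, d⟫` for the Frank–Wolfe gap.
The Lipschitz gradient gives the descent inequality `f (x + t • d) ≤ f x - t Δ + L/2 t² ‖d‖²`,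
and the step rule `t = min 1 (θ Δ / ‖d‖²)` makes `t ‖d‖² ≤ θ Δ`, so one step decreases `f`
by at least `(1 - L θ''/2) · min 1 (θ' Δ / M²) · Δ`, where `M` bounds the diameter of `D`.
By convexity and the choice of `y` as a minimiser of the linearisation, the error
`e = f x - f*` is at most `Δ`; as `e_k` decreases, `e_{k+1} ≤ e_k - c e_k²` for some `c > 0`, and
`(1 - k c e_k)(1 - c e_k) ≥ 0` propagates `c k e_k ≤ 1` by induction.
-/

open RealInnerProductSpace Set

lemma mul_mul_le_one_of_le_sub_mul_sq {u : ℕ → ℝ} {c : ℝ} (hc : 0 ≤ c) (hu : ∀ k, 0 ≤ u k)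
    (hrec : ∀ k, u (k + 1) ≤ u k - c * u k ^ 2) (k : ℕ) : c * k * u k ≤ 1 := by
  induction k with
  | zero => simp
  | succ k ih =>
    have hcu : c * u k ≤ 1 := by
      rcases (hu k).eq_or_lt with h0 | hpos
      · simp [← h0]
      · refine le_of_mul_le_mul_right ?_ hpos
        nlinarith [hrec k, hu (k + 1)]
    have hnext : c * (k + 1) * u (k + 1) ≤ c * (k + 1) * (u k - c * u k ^ 2) := by
      gcongr
      exact hrec k
    push_cast
    nlinarith [mul_nonneg (sub_nonneg.2 ih) (sub_nonneg.2 hcu), sq_nonneg (c * u k)]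

lemma exists_le_div_of_le_sub_mul_min {u : ℕ → ℝ} {a b : ℝ} (ha : 0 < a) (hb : 0 < b)
    (hu : ∀ k, 0 ≤ u k) (hrec : ∀ k, u (k + 1) ≤ u k - a * min 1 (b * u k) * u k) :
    ∃ C, ∀ k : ℕ, 1 ≤ k → u k ≤ C / k := by
  have hanti : Antitone u := antitone_nat_of_succ_le fun k => by
    have : 0 ≤ a * min 1 (b * u k) * u k := by
      have := hu k
      positivity
    linarith [hrec k]
  set c := a * min b (1 / (u 0 + 1))
  have hc : 0 < c := by
    have := hu 0
    positivity
  have hrec' : ∀ k, u (k + 1) ≤ u k - c * u k ^ 2 := fun k => by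
    have hmin : min b (1 / (u 0 + 1)) * u k ≤ min 1 (b * u k) := by
      rw [min_mul_of_nonneg _ _ (hu k), min_comm]
      refine min_le_min ?_ (by rw [mul_comm])
      rw [one_div_mul_eq_div, div_le_one (by linarith [hu 0])]
      linarith [hanti (Nat.zero_le k)]
    have := mul_le_mul_of_nonneg_left hmin (mul_nonneg ha.le (hu k))
    nlinarith [hrec k]
  refine ⟨1 / c, fun k hk => ?_⟩
  have hk : (0 : ℝ) < k := by exact_mod_cast hk
  rw [div_div, le_div_iff₀ (by positivity)]
  linarith [mul_mul_le_one_of_le_sub_mul_sq hc.le hu hrec' k]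

section ConditionalGradient

variable {E : Type*} [NormedAddCommGroup E] [InnerProductSpace ℝ E]
  {D : Set E} {f : E → ℝ} {f' : E → E} {x y : E}

lemma inner_sub_nonpos_of_forall_inner_le {g : E} (hx : x ∈ D)
    (hmin : ∀ w ∈ D, ⟪g, y⟫ ≤ ⟪g, w⟫) : ⟪g, y - x⟫ ≤ 0 := by
  rw [inner_sub_right]
  linarith [hmin x hx]

lemma conditionalGradient_step_mem {g : E} {θ : ℝ} (hD : Convex ℝ D) (hx : x ∈ D) (hy : y ∈ D)
    (hdesc : ⟪g, y - x⟫ ≤ 0) (hθ : 0 ≤ θ) :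
    x + min 1 (θ * (-⟪g, y - x⟫ / ‖y - x‖ ^ 2)) • (y - x) ∈ D :=
  hD.add_smul_sub_mem hx hy
    ⟨le_min zero_le_one (mul_nonneg hθ (div_nonneg (neg_nonneg.2 hdesc) (sq_nonneg _))),
      min_le_left _ _⟩

variable [CompleteSpace E]

lemma HasGradientAt.hasDerivAt_add_smul {g v : E} {t : ℝ} (hg : HasGradientAt f g (x + t • v)) :
    HasDerivAt (fun s : ℝ => f (x + s • v)) ⟪g, v⟫ t := by
  have hline : HasDerivAt (fun s : ℝ => x + s • v) v t := by
    simpa using ((hasDerivAt_id t).smul_const v).const_add x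
  exact hg.hasFDerivAt.comp_hasDerivAt t hline

lemma ConvexOn.add_inner_le_of_hasGradientAt {g : E} (hfc : ConvexOn ℝ D f) (hx : x ∈ D)
    (hy : y ∈ D) (hg : HasGradientAt f g x) : f x + ⟪g, y - x⟫ ≤ f y := by
  have hline : f ∘ AffineMap.lineMap x y = fun s : ℝ => f (x + s • (y - x)) := by
    ext s
    simp [AffineMap.lineMap_apply_module', add_comm]
  have hφ : ConvexOn ℝ (Icc 0 1) (fun s : ℝ => f (x + s • (y - x))) :=
    hline ▸ (hfc.comp_affineMap (AffineMap.lineMap x y)).subset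
      (fun _ hs => hfc.1.lineMap_mem hx hy hs) (convex_Icc 0 1)
  have : ⟪g, y - x⟫ ≤ f y - f x := by
    simpa [slope_def_field] using hφ.le_slope_of_hasDerivAt (by simp) (by simp) zero_lt_one
      (HasGradientAt.hasDerivAt_add_smul (t := 0) (by simpa using hg))
  linarith

lemma le_add_inner_add_of_lipschitz_gradient (hD : Convex ℝ D)
    (hf : ∀ p ∈ D, HasGradientAt f (f' p) p) {L : ℝ}
    (hLip : ∀ p ∈ D, ∀ q ∈ D, ‖f' q - f' p‖ ≤ L * ‖q - p‖) (hx : x ∈ D) (hy : y ∈ D) :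
    f y ≤ f x + ⟪f' x, y - x⟫ + L / 2 * ‖y - x‖ ^ 2 := by
  set d := y - x
  have hseg : ∀ t ∈ Icc (0 : ℝ) 1, x + t • d ∈ D := fun t ht => hD.add_smul_sub_mem hx hy ht
  set χ : ℝ → ℝ := fun t => f (x + t • d) - t * ⟪f' x, d⟫ - L / 2 * t ^ 2 * ‖d‖ ^ 2
  have hχ : ∀ t ∈ Icc (0 : ℝ) 1,
      HasDerivAt χ (⟪f' (x + t • d) - f' x, d⟫ - L * t * ‖d‖ ^ 2) t := fun t ht => by
    have := (((hf _ (hseg t ht)).hasDerivAt_add_smul).sub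
      ((hasDerivAt_id t).mul_const ⟪f' x, d⟫)).sub
      (((hasDerivAt_pow 2 t).const_mul (L / 2)).mul_const (‖d‖ ^ 2))
    exact this.congr_deriv (by rw [inner_sub_left]; ring)
  have hanti : AntitoneOn χ (Icc 0 1) := by
    refine antitoneOn_of_hasDerivWithinAt_nonpos (convex_Icc 0 1)
      (fun t ht => (hχ t ht).continuousAt.continuousWithinAt)
      (fun t ht => (hχ t (interior_subset ht)).hasDerivWithinAt) fun t ht => ?_
    have ht := interior_subset ht
    have hstep : ‖x + t • d - x‖ = t * ‖d‖ := by simp [norm_smul, abs_of_nonneg ht.1]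
    have := hLip x hx _ (hseg t ht)
    rw [hstep] at this
    calc ⟪f' (x + t • d) - f' x, d⟫ - L * t * ‖d‖ ^ 2
        ≤ ‖f' (x + t • d) - f' x‖ * ‖d‖ - L * t * ‖d‖ ^ 2 := by gcongr; exact real_inner_le_norm _ _
      _ ≤ L * (t * ‖d‖) * ‖d‖ - L * t * ‖d‖ ^ 2 := by gcongr
      _ = 0 := by ring
  have hχ0 : χ 0 = f x := by simp [χ]
  have hχ1 : χ 1 = f y - ⟪f' x, d⟫ - L / 2 * ‖d‖ ^ 2 := by simp [χ, d]
  linarith [hanti (left_mem_Icc.2 zero_le_one) (right_mem_Icc.2 zero_le_one) zero_le_one]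

lemma le_add_mul_inner_of_mul_sq_le (hD : Convex ℝ D)
    (hf : ∀ p ∈ D, HasGradientAt f (f' p) p) {L : ℝ} (hL : 0 ≤ L)
    (hLip : ∀ p ∈ D, ∀ q ∈ D, ‖f' q - f' p‖ ≤ L * ‖q - p‖) (hx : x ∈ D) (hy : y ∈ D)
    {t θ : ℝ} (ht : t ∈ Icc 0 1) (htθ : t * ‖y - x‖ ^ 2 ≤ θ * -⟪f' x, y - x⟫) :
    f (x + t • (y - x)) ≤ f x + (1 - L * θ / 2) * t * ⟪f' x, y - x⟫ := by
  have h := le_add_inner_add_of_lipschitz_gradient hD hf hLip hx (hD.add_smul_sub_mem hx hy ht)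
  have hquad : L / 2 * t * (t * ‖y - x‖ ^ 2) ≤ L / 2 * t * (θ * -⟪f' x, y - x⟫) := by
    have := ht.1
    gcongr
  rw [add_sub_cancel_left, inner_smul_right, norm_smul, Real.norm_of_nonneg ht.1] at h
  linarith

lemma ConvexOn.add_inner_le_of_forall_inner_le {g w : E} (hfc : ConvexOn ℝ D f) (hx : x ∈ D)
    (hg : HasGradientAt f g x) (hmin : ∀ w ∈ D, ⟪g, y⟫ ≤ ⟪g, w⟫) (hw : w ∈ D) :
    f x + ⟪g, y - x⟫ ≤ f w := by
  calc f x + ⟪g, y - x⟫ ≤ f x + ⟪g, w - x⟫ := by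
        rw [inner_sub_right, inner_sub_right]
        linarith [hmin w hw]
    _ ≤ f w := hfc.add_inner_le_of_hasGradientAt hx hw hg

lemma ConvexOn.sub_csInf_le_neg_inner {g : E} (hfc : ConvexOn ℝ D f) (hx : x ∈ D)
    (hg : HasGradientAt f g x) (hmin : ∀ w ∈ D, ⟪g, y⟫ ≤ ⟪g, w⟫) :
    f x - sInf (f '' D) ≤ -⟪g, y - x⟫ := by
  have := le_csInf ((nonempty_of_mem hx).image f) (forall_mem_image.2 fun _ hw =>
    hfc.add_inner_le_of_forall_inner_le hx hg hmin hw)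
  linarith

lemma conditionalGradient_step_le (hD : Convex ℝ D) (hf : ∀ p ∈ D, HasGradientAt f (f' p) p)
    {L : ℝ} (hL : 0 ≤ L) (hLip : ∀ p ∈ D, ∀ q ∈ D, ‖f' q - f' p‖ ≤ L * ‖q - p‖)
    (hx : x ∈ D) (hy : y ∈ D) (hdesc : ⟪f' x, y - x⟫ ≤ 0) {M θ' θ θ'' : ℝ}
    (hM : ‖y - x‖ ≤ M) (hθ' : 0 ≤ θ') (hθ : θ ∈ Icc θ' θ'') (hLθ'' : L * θ'' ≤ 2) :
    f (x + min 1 (θ * (-⟪f' x, y - x⟫ / ‖y - x‖ ^ 2)) • (y - x)) ≤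
      f x - (1 - L * θ'' / 2) * min 1 (θ' / M ^ 2 * -⟪f' x, y - x⟫) * -⟪f' x, y - x⟫ := by
  set Δ := -⟪f' x, y - x⟫
  set t := min 1 (θ * (Δ / ‖y - x‖ ^ 2))
  have hΔ : 0 ≤ Δ := neg_nonneg.2 hdesc
  have hθ0 : 0 ≤ θ := hθ'.trans hθ.1
  rcases eq_or_ne (y - x) 0 with hyx | hyx
  · simp [Δ, hyx]
  have hq : 0 < ‖y - x‖ ^ 2 := by positivity
  have ht : t ∈ Icc 0 1 :=
    ⟨le_min zero_le_one (mul_nonneg hθ0 (div_nonneg hΔ hq.le)), min_le_left _ _⟩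
  have htq : t * ‖y - x‖ ^ 2 ≤ θ * Δ := by
    calc t * ‖y - x‖ ^ 2 ≤ θ * (Δ / ‖y - x‖ ^ 2) * ‖y - x‖ ^ 2 := by gcongr; exact min_le_right _ _
      _ = θ * Δ := by field_simp
  have hqM : ‖y - x‖ ^ 2 ≤ M ^ 2 := by gcongr
  have ht_ge : min 1 (θ' / M ^ 2 * Δ) ≤ t := by
    refine min_le_min_left 1 ?_
    calc θ' / M ^ 2 * Δ = θ' * (Δ / M ^ 2) := by ring
      _ ≤ θ * (Δ / ‖y - x‖ ^ 2) := by gcongr; exact hθ.1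
  have hdec := le_add_mul_inner_of_mul_sq_le hD hf hL hLip hx hy ht htq
  have hgain : (1 - L * θ'' / 2) * min 1 (θ' / M ^ 2 * Δ) * Δ ≤ (1 - L * θ / 2) * t * Δ := by
    have : 0 ≤ min 1 (θ' / M ^ 2 * Δ) := le_min zero_le_one (by positivity)
    have : L * θ ≤ L * θ'' := mul_le_mul_of_nonneg_left hθ.2 hL
    gcongr
    linarith
  rw [show ⟪f' x, y - x⟫ = -Δ from (neg_neg _).symm] at hdec
  linarith

lemma ConvexOn.conditionalGradient_step_sub_csInf_le (hfc : ConvexOn ℝ D f)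
    (hf : ∀ p ∈ D, HasGradientAt f (f' p) p) {L : ℝ} (hL : 0 ≤ L)
    (hLip : ∀ p ∈ D, ∀ q ∈ D, ‖f' q - f' p‖ ≤ L * ‖q - p‖) (hbdd : BddBelow (f '' D))
    (hx : x ∈ D) (hy : y ∈ D) (hmin : ∀ w ∈ D, ⟪f' x, y⟫ ≤ ⟪f' x, w⟫) {M θ' θ θ'' : ℝ}
    (hM : ‖y - x‖ ≤ M) (hθ' : 0 ≤ θ') (hθ : θ ∈ Icc θ' θ'') (hLθ'' : L * θ'' < 2) :
    f (x + min 1 (θ * (-⟪f' x, y - x⟫ / ‖y - x‖ ^ 2)) • (y - x)) - sInf (f '' D) ≤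
      f x - sInf (f '' D) - (1 - L * θ'' / 2) * min 1 (θ' / M ^ 2 * (f x - sInf (f '' D))) *
        (f x - sInf (f '' D)) := by
  set e := f x - sInf (f '' D)
  set Δ := -⟪f' x, y - x⟫
  have he : 0 ≤ e := sub_nonneg.2 (csInf_le hbdd (mem_image_of_mem f hx))
  have hgap : e ≤ Δ := hfc.sub_csInf_le_neg_inner hx (hf x hx) hmin
  have hdec := conditionalGradient_step_le hfc.1 hf hL hLip hx hy
    (inner_sub_nonpos_of_forall_inner_le hx hmin) hM hθ' hθ hLθ''.le
  have hmono : (1 - L * θ'' / 2) * min 1 (θ' / M ^ 2 * e) * e ≤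
      (1 - L * θ'' / 2) * min 1 (θ' / M ^ 2 * Δ) * Δ := by
    have : 0 ≤ 1 - L * θ'' / 2 := by linarith
    have : 0 ≤ min 1 (θ' / M ^ 2 * Δ) :=
      le_min zero_le_one (mul_nonneg (by positivity) (he.trans hgap))
    gcongr
  linarith

end ConditionalGradient

theorem stmt_7_general {n : ℕ} (D : Set (EuclideanSpace ℝ (Fin n)))
    (hDconv : Convex ℝ D)
    (hDbd : Bornology.IsBounded D)
    (f : EuclideanSpace ℝ (Fin n) → ℝ)
    (f' : EuclideanSpace ℝ (Fin n) → EuclideanSpace ℝ (Fin n))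
    (hf : ∀ x ∈ D, HasGradientAt f (f' x) x)
    (hfc : ConvexOn ℝ D f)
    (L : ℝ) (hL : 0 < L)
    (hLip : ∀ x ∈ D, ∀ y ∈ D, ‖f' y - f' x‖ ≤ L * ‖y - x‖)
    (θ' θ'' : ℝ) (hθ' : 0 < θ') (hθ'' : θ'' < 2 / L)
    (θk : ℕ → ℝ) (hθk : ∀ k, θk k ∈ Set.Icc θ' θ'')
    (x y : ℕ → EuclideanSpace ℝ (Fin n)) (lam : ℕ → ℝ)
    (hx0 : x 0 ∈ D)
    (hy : ∀ k, y k ∈ D ∧ ∀ w ∈ D, ⟪f' (x k), y k⟫ ≤ ⟪f' (x k), w⟫)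
    (hlam : ∀ k, lam k =
      min 1 (θk k * (-⟪f' (x k), y k - x k⟫ / ‖y k - x k‖ ^ 2)))
    (hstep : ∀ k, x (k + 1) = x k + lam k • (y k - x k)) :
    ∃ C : ℝ, ∀ k : ℕ, 1 ≤ k → f (x k) - sInf (f '' D) ≤ C / k := by
  have hLθ'' : L * θ'' < 2 := by rwa [lt_div_iff₀ hL, mul_comm] at hθ''
  obtain ⟨R, hR, hRD⟩ := hDbd.exists_pos_norm_le
  have hdiam : ∀ p ∈ D, ∀ q ∈ D, ‖q - p‖ ≤ 2 * R := fun p hp q hq =>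
    (norm_sub_le q p).trans (by linarith [hRD p hp, hRD q hq])
  have hxD : ∀ k, x k ∈ D := by
    intro k
    induction k with
    | zero => exact hx0
    | succ k ih =>
      rw [hstep, hlam]
      exact conditionalGradient_step_mem hDconv ih (hy k).1
        (inner_sub_nonpos_of_forall_inner_le ih (hy k).2) (hθ'.le.trans (hθk k).1)
  have hbdd : BddBelow (f '' D) := ⟨_, forall_mem_image.2 fun _ hw =>
    hfc.add_inner_le_of_forall_inner_le hx0 (hf _ hx0) (hy 0).2 hw⟩
  refine exists_le_div_of_le_sub_mul_min (a := 1 - L * θ'' / 2) (b := θ' / (2 * R) ^ 2)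
    (by linarith) (by positivity)
    (fun k => sub_nonneg.2 (csInf_le hbdd (mem_image_of_mem f (hxD k)))) fun k => ?_
  rw [hstep, hlam]
  exact hfc.conditionalGradient_step_sub_csInf_le hf hL.le hLip hbdd (hxD k) (hy k).1 (hy k).2
    (hdiam _ (hxD k) _ (hy k).1) hθ'.le (hθk k) hLθ''

/-- Suppose `f` is convex and `f'` is Lipschitz continuous on `D` with
constant `L > 0`.  Let `{x^k}` be generated by the conditional gradient method
`x^{k+1} = x^k + λ_k d^k`, where `d^k = y^k − x^k`, `y^k ∈ Z(x^k)`, and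
`λ_k = min{1, θ_k σ_k}` with `σ_k = −⟪f'(x^k), d^k⟫ / ‖d^k‖²` and `θ_k ∈ [θ', θ'']` for
fixed `0 < θ' ≤ θ'' < 2/L`.  Then there exists a constant `C < +∞` such that
`f(x^k) − f* ≤ C/k` for all `k ≥ 1`. -/
theorem stmt_7 {n : ℕ} (D : Set (EuclideanSpace ℝ (Fin n)))
    (hDne : D.Nonempty) (hDconv : Convex ℝ D) (hDcl : IsClosed D)
    (hDbd : Bornology.IsBounded D)
    (f : EuclideanSpace ℝ (Fin n) → ℝ)
    (f' : EuclideanSpace ℝ (Fin n) → EuclideanSpace ℝ (Fin n))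
    (hf : ∀ x ∈ D, HasGradientAt f (f' x) x)
    (hf' : ContinuousOn f' D)
    (hfc : ConvexOn ℝ D f)
    (L : ℝ) (hL : 0 < L)
    (hLip : ∀ x ∈ D, ∀ y ∈ D, ‖f' y - f' x‖ ≤ L * ‖y - x‖)
    (θ' θ'' : ℝ) (hθ' : 0 < θ') (hθ'θ'' : θ' ≤ θ'') (hθ'' : θ'' < 2 / L)
    (θk : ℕ → ℝ) (hθk : ∀ k, θk k ∈ Set.Icc θ' θ'')
    (x y : ℕ → EuclideanSpace ℝ (Fin n)) (lam : ℕ → ℝ)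
    (hx0 : x 0 ∈ D)
    (hy : ∀ k, y k ∈ D ∧ ∀ w ∈ D, ⟪f' (x k), y k⟫ ≤ ⟪f' (x k), w⟫)
    (hlam : ∀ k, lam k =
      min 1 (θk k * (-⟪f' (x k), y k - x k⟫ / ‖y k - x k‖ ^ 2)))
    (hstep : ∀ k, x (k + 1) = x k + lam k • (y k - x k)) :
    ∃ C : ℝ, ∀ k : ℕ, 1 ≤ k → f (x k) - sInf (f '' D) ≤ C / k :=
  stmt_7_general D hDconv hDbd f f' hf hfc L hL hLip θ' θ'' hθ' hθ'' θk hθk x y lam hx0 hy hlam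
    hstep
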